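/- Let (x, v) be a collision-free solution of the second-order singular Cucker–Smale system with critical exponent β = 1, coupling strength κ > 0, and initial data satisfying Σ_i x_i(0) = 0, Σ_i v_i(0) = 0 and x_i(0) ≠ x_j(0) for i ≠ j. Then unconditional flocking occurs with exponential rate: there exist an equilibrium state X^∞ = (x_1^∞, …, x_N^∞) ∈ ℝ^N and constants C, C', λ > 0 such that for all i and all t ≥ 0, |x_i(t) − x_i^∞| ≤ C·e^{−λt} and |v_i(t)| ≤ C'·e^{−λt}. -/

import Mathlib

open Real Filter Set Topology

/-- A collision-free solution of the second-order singular Cucker–Smale system on the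
real line at the critical exponent `β = 1`, i.e. with communication weight
`ψ(r) = 1/|r|`: `x_i' = v_i`, `v_i' = (κ/N) Σ_{j≠i} (v_j − v_i)/|x_j − x_i|`,
with no collisions. -/
def IsCFSol2Crit (N : ℕ) (κ : ℝ) (x v : ℝ → Fin N → ℝ) : Prop :=
  (∀ t ≥ (0:ℝ), ∀ i j : Fin N, i ≠ j → x t i ≠ x t j) ∧
  (∀ i, ∀ t ≥ (0:ℝ), HasDerivWithinAt (fun s => x s i) (v t i) (Set.Ici 0) t) ∧
  ∀ i, ∀ t ≥ (0:ℝ), HasDerivWithinAt (fun s => v s i)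
    ((κ / (N:ℝ)) * ∑ j ∈ Finset.univ.erase i,
      (v t j - v t i) / |x t j - x t i|) (Set.Ici 0) t

/-!
Momentum is conserved, so for the kinetic energy `E = Σ vᵢ²` and the spread
`P = Σᵢⱼ (xᵢ - xⱼ)²` of the positions, the velocity spread `Σᵢⱼ (vᵢ - vⱼ)²` equals `2 N E`.
As `|xᵢ - xⱼ| ≤ √P`, the dissipation gives `E' ≤ -2 κ E / √P`, and Cauchy–Schwarz gives
`P' ≤ 2 √P √(2 N E)`. Hence `√(2 N E) + (κ / 2) log P` is nonincreasing, which bounds `P`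
uniformly in time. Then `E' ≤ -2 λ E` with `λ = κ / √(sup P)`, so the velocities decay
exponentially, and the positions converge at the same rate.
-/

namespace CuckerSmale

open Finset

section Algebra

variable {ι : Type*} [Fintype ι]

def energy (u : ι → ℝ) : ℝ := ∑ i, u i ^ 2

def spread (u : ι → ℝ) : ℝ := ∑ i, ∑ j, (u i - u j) ^ 2

lemma two_mul_sum_sum_eq_sum_sum_add_swap (f : ι → ι → ℝ) :
    2 * ∑ i, ∑ j, f i j = ∑ i, ∑ j, (f i j + f j i) := by
  simp only [sum_add_distrib, two_mul]
  rw [sum_comm (f := fun i j => f j i)]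

lemma sum_sum_sub_div_eq_zero (u : ι → ℝ) {w : ι → ι → ℝ} (hw : ∀ i j, w i j = w j i) :
    ∑ i, ∑ j, (u j - u i) / w i j = 0 := by
  have h := two_mul_sum_sum_eq_sum_sum_add_swap fun i j => (u j - u i) / w i j
  simp only [hw _, ← add_div, sub_add_sub_cancel, sub_self, zero_div, sum_const_zero] at h
  linarith

lemma two_mul_sum_mul_sum_sub_div (u : ι → ℝ) {w : ι → ι → ℝ} (hw : ∀ i j, w i j = w j i) :
    2 * ∑ i, u i * ∑ j, (u j - u i) / w i j = -∑ i, ∑ j, (u i - u j) ^ 2 / w i j := by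
  rw [sum_congr rfl fun i _ => mul_sum _ _ _, two_mul_sum_sum_eq_sum_sum_add_swap,
    ← sum_neg_distrib]
  refine sum_congr rfl fun i _ => ?_
  rw [← sum_neg_distrib]
  refine sum_congr rfl fun j _ => ?_
  rw [hw j i]
  ring

lemma spread_eq (u : ι → ℝ) :
    spread u = 2 * Fintype.card ι * energy u - 2 * (∑ i, u i) ^ 2 := by
  simp only [spread, energy, sub_sq, sum_add_distrib, sum_sub_distrib, sum_const, card_univ,
    nsmul_eq_mul, ← mul_sum, ← sum_mul]
  ring

lemma sq_le_energy (u : ι → ℝ) (i : ι) : u i ^ 2 ≤ energy u :=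
  single_le_sum (f := fun j => u j ^ 2) (fun _ _ => sq_nonneg _) (mem_univ i)

lemma energy_nonneg (u : ι → ℝ) : 0 ≤ energy u :=
  sum_nonneg fun _ _ => sq_nonneg _

lemma sq_sub_le_spread (u : ι → ℝ) (i j : ι) : (u i - u j) ^ 2 ≤ spread u :=
  calc (u i - u j) ^ 2 ≤ ∑ j', (u i - u j') ^ 2 :=
        single_le_sum (f := fun j' => (u i - u j') ^ 2) (fun _ _ => sq_nonneg _) (mem_univ j)
    _ ≤ spread u :=
        single_le_sum (f := fun i' => ∑ j', (u i' - u j') ^ 2)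
          (fun _ _ => sum_nonneg fun _ _ => sq_nonneg _) (mem_univ i)

lemma spread_pos {u : ι → ℝ} {i j : ι} (h : u i ≠ u j) : 0 < spread u :=
  (sq_pos_of_ne_zero (sub_ne_zero.2 h)).trans_le (sq_sub_le_spread u i j)

lemma sum_sum_sub_mul_sub_le (a b : ι → ℝ) :
    ∑ i, ∑ j, (a i - a j) * (b i - b j) ≤ √(spread a) * √(spread b) := by
  simp only [spread, ← Fintype.sum_prod_type']
  exact sum_mul_le_sqrt_mul_sqrt _ (fun p : ι × ι => a p.1 - a p.2) (fun p => b p.1 - b p.2)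

lemma spread_div_sqrt_spread_le (u : ι → ℝ) {y : ι → ℝ} (hy : Function.Injective y) :
    spread u / √(spread y) ≤ ∑ i, ∑ j, (u i - u j) ^ 2 / |y j - y i| := by
  rw [spread, sum_div]
  refine sum_le_sum fun i _ => ?_
  rw [sum_div]
  refine sum_le_sum fun j _ => ?_
  rcases eq_or_ne i j with rfl | hij
  · simp
  have hpos : 0 < |y j - y i| := abs_pos.2 (sub_ne_zero.2 (hy.ne hij.symm))
  refine div_le_div_of_nonneg_left (sq_nonneg _) hpos ?_
  rw [← sqrt_sq_eq_abs]
  exact sqrt_le_sqrt (sq_sub_le_spread y j i)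

variable {y : ℝ → ι → ℝ} {y' : ι → ℝ} {s : Set ℝ} {t : ℝ}

lemma hasDerivWithinAt_energy (hy : ∀ i, HasDerivWithinAt (fun r => y r i) (y' i) s t) :
    HasDerivWithinAt (fun r => energy (y r)) (2 * ∑ i, y t i * y' i) s t := by
  rw [mul_sum]
  refine HasDerivWithinAt.fun_sum fun i _ => ((hy i).pow 2).congr_deriv ?_
  push_cast
  ring

lemma hasDerivWithinAt_spread (hy : ∀ i, HasDerivWithinAt (fun r => y r i) (y' i) s t) :
    HasDerivWithinAt (fun r => spread (y r))
      (2 * ∑ i, ∑ j, (y t i - y t j) * (y' i - y' j)) s t := by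
  simp only [mul_sum]
  refine HasDerivWithinAt.fun_sum fun i _ => HasDerivWithinAt.fun_sum fun j _ =>
    (((hy i).sub (hy j)).pow 2).congr_deriv ?_
  simp only [Pi.sub_apply]
  push_cast
  ring

end Algebra

section Analysis

lemma antitoneOn_Ici_of_hasDerivWithinAt_Ici_nonpos {f f' : ℝ → ℝ} {a : ℝ}
    (hf : ContinuousOn f (Ici a)) (hf' : ∀ t ≥ a, HasDerivWithinAt f (f' t) (Ici t) t)
    (hf'_nonpos : ∀ t ≥ a, f' t ≤ 0) : AntitoneOn f (Ici a) := by
  intro s hs t _ hst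
  exact image_le_of_deriv_right_le_deriv_boundary
    (hf.mono (Icc_subset_Ici_self.trans (Ici_subset_Ici.2 hs)))
    (fun u hu => hf' u (le_trans hs hu.1)) (B := fun _ => f s) (B' := fun _ => 0) le_rfl
    continuousOn_const (fun _ _ => hasDerivWithinAt_const _ _ _)
    (fun u hu => hf'_nonpos u (le_trans hs hu.1)) ⟨hst, le_rfl⟩

lemma antitoneOn_Ici_of_hasDerivWithinAt_nonpos {f f' : ℝ → ℝ} {a : ℝ}
    (hf : ∀ t ≥ a, HasDerivWithinAt f (f' t) (Ici a) t) (hf'_nonpos : ∀ t ≥ a, f' t ≤ 0) :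
    AntitoneOn f (Ici a) :=
  antitoneOn_Ici_of_hasDerivWithinAt_Ici_nonpos (fun t ht => (hf t ht).continuousWithinAt)
    (fun t ht => (hf t ht).mono (Ici_subset_Ici.2 ht)) hf'_nonpos

lemma le_mul_exp_of_hasDerivWithinAt_le {E E' : ℝ → ℝ} {c : ℝ}
    (hE : ∀ t ≥ 0, HasDerivWithinAt E (E' t) (Ici 0) t) (hE' : ∀ t ≥ 0, E' t ≤ -c * E t)
    {t : ℝ} (ht : 0 ≤ t) : E t ≤ E 0 * exp (-c * t) := by
  have hanti : AntitoneOn (fun s => exp (c * s) * E s) (Ici 0) := by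
    refine antitoneOn_Ici_of_hasDerivWithinAt_nonpos (fun s hs =>
      ((((hasDerivAt_id s).const_mul c).exp).hasDerivWithinAt.mul (hE s hs))) fun s hs => ?_
    have : E' s + c * E s ≤ 0 := by linarith [hE' s hs]
    simp only [id, mul_one]
    nlinarith [exp_pos (c * s)]
  have := hanti self_mem_Ici ht ht
  simp only [mul_zero, exp_zero, one_mul] at this
  rw [neg_mul, exp_neg, ← div_eq_mul_inv, le_div_iff₀ (exp_pos _), mul_comm]
  exact this

lemma abs_sub_le_of_abs_deriv_le_mul_exp {f f' : ℝ → ℝ} {M c : ℝ} (hc : 0 < c)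
    (hf : ∀ u ≥ 0, HasDerivWithinAt f (f' u) (Ici 0) u)
    (hf' : ∀ u ≥ 0, |f' u| ≤ M * exp (-c * u)) {s t : ℝ} (hs : 0 ≤ s) (hst : s ≤ t) :
    |f t - f s| ≤ M / c * exp (-c * s) := by
  have hM : 0 ≤ M := by simpa using (abs_nonneg _).trans (hf' 0 le_rfl)
  have hB : ∀ u, HasDerivAt (fun u => M / c * (exp (-c * s) - exp (-c * u)))
      (M * exp (-c * u)) u := fun u => by
    refine ((((hasDerivAt_id u).const_mul (-c)).exp.const_sub (exp (-c * s))).const_mul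
      (M / c)).congr_deriv ?_
    simp only [id]
    field_simp
  have := image_norm_le_of_norm_deriv_right_le_deriv_boundary (f := fun u => f u - f s)
    (fun u hu => ((hf u (hs.trans hu.1)).continuousWithinAt.mono
      (Icc_subset_Ici_self.trans (Ici_subset_Ici.2 hs))).sub continuousWithinAt_const)
    (fun u hu => ((hf u (hs.trans hu.1)).mono (Ici_subset_Ici.2 (hs.trans hu.1))).sub_const _)
    (by simp) hB (fun u hu => hf' u (hs.trans hu.1)) ⟨hst, le_rfl⟩
  simp only [Real.norm_eq_abs] at this
  nlinarith [exp_pos (-c * t), div_nonneg hM hc.le]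

lemma exists_forall_dist_le_of_dist_le {α : Type*} [MetricSpace α] [CompleteSpace α]
    {f : ℝ → α} {b : ℝ → ℝ} (hb : Tendsto b atTop (𝓝 0))
    (h : ∀ s t, 0 ≤ s → s ≤ t → dist (f t) (f s) ≤ b s) :
    ∃ L, ∀ s ≥ 0, dist (f s) L ≤ b s := by
  have hcauchy : CauchySeq f := by
    refine Metric.cauchySeq_iff'.2 fun ε hε => ?_
    obtain ⟨T, hT, hT0⟩ := ((hb.eventually (gt_mem_nhds hε)).and (eventually_ge_atTop 0)).exists
    exact ⟨T, fun t ht => (h T t hT0 ht).trans_lt hT⟩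
  obtain ⟨L, hL⟩ := cauchySeq_tendsto_of_complete hcauchy
  refine ⟨L, fun s hs => le_of_tendsto (tendsto_const_nhds.dist hL) ?_⟩
  filter_upwards [eventually_ge_atTop s] with t hst
  rw [dist_comm]
  exact h s t hs hst

end Analysis

section Lyapunov

variable {E P E' P' : ℝ → ℝ} {a b : ℝ}

lemma antitoneOn_mul_sqrt_add_mul_log (ha : 0 ≤ a) (hb : 0 < b)
    (hE : ∀ t ≥ 0, HasDerivWithinAt E (E' t) (Ici 0) t)
    (hP : ∀ t ≥ 0, HasDerivWithinAt P (P' t) (Ici 0) t)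
    (hE_nonneg : ∀ t, 0 ≤ E t) (hP_pos : ∀ t ≥ 0, 0 < P t)
    (hE' : ∀ t ≥ 0, E' t ≤ -(2 * b * E t / √(P t)))
    (hP' : ∀ t ≥ 0, P' t ≤ 2 * a * √(P t) * √(E t)) :
    AntitoneOn (fun t => a * √(E t) + b / 2 * log (P t)) (Ici 0) := by
  have hE_anti : AntitoneOn E (Ici 0) :=
    antitoneOn_Ici_of_hasDerivWithinAt_nonpos hE fun t ht =>
      (hE' t ht).trans (neg_nonpos.2 (by have := hE_nonneg t; positivity))
  -- Where `E t = 0` the junk value `E' t / (2 * √0) = 0` is the right derivative of `√E`,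
  -- since `E` vanishes from then on.
  have hsqrtE : ∀ t ≥ 0, HasDerivWithinAt (fun s => √(E s)) (E' t / (2 * √(E t))) (Ici t) t := by
    intro t ht
    rcases (hE_nonneg t).eq_or_lt with hEt | hEt
    · have hzero : ∀ s ∈ Ici t, √(E s) = 0 := fun s hs => by
        rw [sqrt_eq_zero', hEt]
        exact hE_anti ht (ht.trans hs) hs
      rw [← hEt, sqrt_zero, mul_zero, div_zero]
      exact (hasDerivWithinAt_const t _ 0).congr_of_mem hzero self_mem_Ici
    · exact ((hE t ht).sqrt hEt.ne').mono (Ici_subset_Ici.2 ht)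
  refine antitoneOn_Ici_of_hasDerivWithinAt_Ici_nonpos
    (f' := fun t => a * (E' t / (2 * √(E t))) + b / 2 * (P' t / P t)) (fun t ht => ?_)
    (fun t ht => ((hsqrtE t ht).const_mul a).add
      ((((hP t ht).log (hP_pos t ht).ne').mono (Ici_subset_Ici.2 ht)).const_mul _)) (fun t ht => ?_)
  · exact (continuousWithinAt_const.mul (hE t ht).continuousWithinAt.sqrt).add
      (continuousWithinAt_const.mul ((hP t ht).continuousWithinAt.log (hP_pos t ht).ne'))
  · have hE't := hE' t ht
    have hP't := hP' t ht
    rw [← sq_sqrt (hP_pos t ht).le]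
    rw [← sq_sqrt (hE_nonneg t)] at hE't
    have hr : 0 < √(P t) := sqrt_pos.2 (hP_pos t ht)
    set q := √(E t)
    set r := √(P t)
    rcases (show 0 ≤ q from sqrt_nonneg _).eq_or_lt with hq | hq
    · rw [← hq] at hP't ⊢
      simp only [mul_zero, div_zero, zero_add] at hP't ⊢
      exact mul_nonpos_of_nonneg_of_nonpos (half_pos hb).le
        (div_nonpos_of_nonpos_of_nonneg hP't (sq_nonneg r))
    · have h1 : a * (E' t / (2 * q)) ≤ a * (-(2 * b * q ^ 2 / r) / (2 * q)) := by gcongr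
      have h2 : b / 2 * (P' t / r ^ 2) ≤ b / 2 * (2 * a * r * q / r ^ 2) := by gcongr
      have h3 : a * (-(2 * b * q ^ 2 / r) / (2 * q)) + b / 2 * (2 * a * r * q / r ^ 2) = 0 := by
        field_simp
        ring
      linarith

lemma le_mul_exp_of_lyapunov (ha : 0 ≤ a) (hb : 0 < b)
    (hE : ∀ t ≥ 0, HasDerivWithinAt E (E' t) (Ici 0) t)
    (hP : ∀ t ≥ 0, HasDerivWithinAt P (P' t) (Ici 0) t)
    (hE_nonneg : ∀ t, 0 ≤ E t) (hP_pos : ∀ t ≥ 0, 0 < P t)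
    (hE' : ∀ t ≥ 0, E' t ≤ -(2 * b * E t / √(P t)))
    (hP' : ∀ t ≥ 0, P' t ≤ 2 * a * √(P t) * √(E t)) {t : ℝ} (ht : 0 ≤ t) :
    P t ≤ P 0 * exp (2 * a * √(E 0) / b) := by
  have hL := antitoneOn_mul_sqrt_add_mul_log ha hb hE hP hE_nonneg hP_pos hE' hP' self_mem_Ici ht ht
  have hlog : log (P t) ≤ log (P 0) + 2 * a * √(E 0) / b := by
    refine le_of_mul_le_mul_left ?_ (half_pos hb)
    rw [mul_add, show b / 2 * (2 * a * √(E 0) / b) = a * √(E 0) by field_simp]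
    nlinarith [sqrt_nonneg (E t)]
  calc P t = exp (log (P t)) := (exp_log (hP_pos t ht)).symm
    _ ≤ exp (log (P 0) + 2 * a * √(E 0) / b) := exp_le_exp.2 hlog
    _ = P 0 * exp (2 * a * √(E 0) / b) := by rw [exp_add, exp_log (hP_pos 0 le_rfl)]

end Lyapunov

end CuckerSmale

namespace IsCFSol2Crit

open CuckerSmale Finset

variable {N : ℕ} {κ : ℝ} {x v : ℝ → Fin N → ℝ}

lemma hasDerivWithinAt_velocity (h : IsCFSol2Crit N κ x v) (i : Fin N) {t : ℝ} (ht : 0 ≤ t) :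
    HasDerivWithinAt (fun s => v s i) (κ / N * ∑ j, (v t j - v t i) / |x t j - x t i|)
      (Ici 0) t := by
  rw [← sum_erase univ (a := i) (by simp)]
  exact h.2.2 i t ht

lemma sum_velocity_eq (h : IsCFSol2Crit N κ x v) {t : ℝ} (ht : 0 ≤ t) :
    ∑ i, v t i = ∑ i, v 0 i := by
  have hderiv : ∀ s ≥ 0, HasDerivWithinAt (fun r => ∑ i, v r i) 0 (Ici 0) s := fun s hs => by
    have := HasDerivWithinAt.fun_sum (u := univ) fun i _ => h.hasDerivWithinAt_velocity i hs
    rwa [← mul_sum, sum_sum_sub_div_eq_zero _ fun i j => abs_sub_comm _ _, mul_zero] at this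
  exact constant_of_has_deriv_right_zero
    (fun s hs => (hderiv s hs.1).continuousWithinAt.mono Icc_subset_Ici_self)
    (fun s hs => (hderiv s hs.1).mono (Ici_subset_Ici.2 hs.1)) t ⟨ht, le_rfl⟩

lemma spread_velocity_eq (h : IsCFSol2Crit N κ x v) (hv0 : ∑ i, v 0 i = 0) {t : ℝ}
    (ht : 0 ≤ t) : spread (v t) = 2 * N * energy (v t) := by
  rw [spread_eq, h.sum_velocity_eq ht, hv0, Fintype.card_fin]
  ring

lemma spread_position_pos (h : IsCFSol2Crit N κ x v) (hN : 2 ≤ N) {t : ℝ} (ht : 0 ≤ t) :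
    0 < spread (x t) :=
  spread_pos (h.1 t ht ⟨0, by omega⟩ ⟨1, by omega⟩ (by simp [Fin.ext_iff]))

lemma hasDerivWithinAt_energy_velocity (h : IsCFSol2Crit N κ x v) {t : ℝ} (ht : 0 ≤ t) :
    HasDerivWithinAt (fun s => energy (v s))
      (-(κ / N * ∑ i, ∑ j, (v t i - v t j) ^ 2 / |x t j - x t i|)) (Ici 0) t := by
  refine (hasDerivWithinAt_energy fun i => h.hasDerivWithinAt_velocity i ht).congr_deriv ?_
  simp only [mul_left_comm (v t _) (κ / N), ← mul_sum]
  rw [mul_left_comm, two_mul_sum_mul_sum_sub_div _ fun i j => abs_sub_comm _ _, mul_neg]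

lemma hasDerivWithinAt_spread_position (h : IsCFSol2Crit N κ x v) {t : ℝ} (ht : 0 ≤ t) :
    HasDerivWithinAt (fun s => spread (x s))
      (2 * ∑ i, ∑ j, (x t i - x t j) * (v t i - v t j)) (Ici 0) t :=
  hasDerivWithinAt_spread fun i => h.2.1 i t ht

lemma energy_deriv_le (h : IsCFSol2Crit N κ x v) (hκ : 0 ≤ κ) (hv0 : ∑ i, v 0 i = 0) {t : ℝ}
    (ht : 0 ≤ t) :
    -(κ / N * ∑ i, ∑ j, (v t i - v t j) ^ 2 / |x t j - x t i|)
      ≤ -(2 * κ * energy (v t) / √(spread (x t))) := by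
  have hinj : Function.Injective (x t) := fun i j hij => by
    by_contra hne
    exact h.1 t ht i j hne hij
  calc -(κ / N * ∑ i, ∑ j, (v t i - v t j) ^ 2 / |x t j - x t i|)
      ≤ -(κ / N * (spread (v t) / √(spread (x t)))) :=
        neg_le_neg (mul_le_mul_of_nonneg_left (spread_div_sqrt_spread_le _ hinj) (by positivity))
    _ = -(2 * κ * energy (v t) / √(spread (x t))) := by
        rcases Nat.eq_zero_or_pos N with rfl | hN
        · simp [energy]
        rw [h.spread_velocity_eq hv0 ht]
        field_simp

lemma spread_deriv_le (h : IsCFSol2Crit N κ x v) (hv0 : ∑ i, v 0 i = 0) {t : ℝ} (ht : 0 ≤ t) :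
    2 * ∑ i, ∑ j, (x t i - x t j) * (v t i - v t j)
      ≤ 2 * √(2 * N) * √(spread (x t)) * √(energy (v t)) := by
  have := sum_sum_sub_mul_sub_le (x t) (v t)
  rw [h.spread_velocity_eq hv0 ht, sqrt_mul (by positivity)] at this
  linarith

lemma spread_position_le (h : IsCFSol2Crit N κ x v) (hN : 2 ≤ N) (hκ : 0 < κ)
    (hv0 : ∑ i, v 0 i = 0) {t : ℝ} (ht : 0 ≤ t) :
    spread (x t) ≤ spread (x 0) * exp (2 * √(2 * N) * √(energy (v 0)) / κ) :=
  le_mul_exp_of_lyapunov (sqrt_nonneg _) hκ (fun _ hs => h.hasDerivWithinAt_energy_velocity hs)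
    (fun _ hs => h.hasDerivWithinAt_spread_position hs) (fun _ => energy_nonneg _)
    (fun _ hs => h.spread_position_pos hN hs) (fun _ hs => h.energy_deriv_le hκ.le hv0 hs)
    (fun _ hs => h.spread_deriv_le hv0 hs) ht

lemma exists_abs_velocity_le (h : IsCFSol2Crit N κ x v) (hN : 2 ≤ N) (hκ : 0 < κ)
    (hv0 : ∑ i, v 0 i = 0) :
    ∃ lam > 0, ∀ i, ∀ t ≥ 0, |v t i| ≤ √(energy (v 0)) * exp (-lam * t) := by
  set B := spread (x 0) * exp (2 * √(2 * N) * √(energy (v 0)) / κ)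
  have hB : 0 < B := mul_pos (h.spread_position_pos hN le_rfl) (exp_pos _)
  set lam := κ / √B
  have hlam : 0 < lam := div_pos hκ (sqrt_pos.2 hB)
  have hdecay : ∀ t ≥ 0, energy (v t) ≤ energy (v 0) * exp (-(2 * lam) * t) :=
    fun t => le_mul_exp_of_hasDerivWithinAt_le (fun _ hs => h.hasDerivWithinAt_energy_velocity hs)
      fun s hs => by
        have hE := energy_nonneg (v s)
        have hP := h.spread_position_pos hN hs
        have hPB : √(spread (x s)) ≤ √B := sqrt_le_sqrt (h.spread_position_le hN hκ hv0 hs)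
        calc _ ≤ -(2 * κ * energy (v s) / √(spread (x s))) := h.energy_deriv_le hκ.le hv0 hs
          _ ≤ -(2 * κ * energy (v s) / √B) := by gcongr
          _ = -(2 * lam) * energy (v s) := by ring
  refine ⟨lam, hlam, fun i t ht =>
    (abs_le_sqrt ((sq_le_energy _ i).trans (hdecay t ht))).trans_eq ?_⟩
  rw [sqrt_mul (energy_nonneg _), show -(2 * lam) * t = -lam * t + -lam * t by ring, exp_add,
    sqrt_mul_self (exp_pos _).le]

end IsCFSol2Crit

open CuckerSmale

theorem stmt18_general (N : ℕ) (hN : 2 ≤ N) (κ : ℝ) (hκ : 0 < κ)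
    (x v : ℝ → Fin N → ℝ) (hxv : IsCFSol2Crit N κ x v)
    (hv0 : ∑ i, v 0 i = 0) :
    ∃ Xinf : Fin N → ℝ, ∃ C C' lam : ℝ, 0 < C ∧ 0 < C' ∧ 0 < lam ∧
      ∀ i : Fin N, ∀ t ≥ (0:ℝ),
        |x t i - Xinf i| ≤ C * Real.exp (-lam * t) ∧
        |v t i| ≤ C' * Real.exp (-lam * t) := by
  obtain ⟨lam, hlam, hv⟩ := hxv.exists_abs_velocity_le hN hκ hv0
  set M := √(energy (v 0))
  have hdecay : Tendsto (fun s => M / lam * exp (-lam * s)) atTop (𝓝 0) := by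
    simpa [neg_mul] using
      (tendsto_exp_neg_atTop_nhds_zero.comp (tendsto_id.const_mul_atTop hlam)).const_mul (M / lam)
  choose Xinf hXinf using fun i => exists_forall_dist_le_of_dist_le (f := fun t => x t i) hdecay
    fun s t hs hst => abs_sub_le_of_abs_deriv_le_mul_exp hlam (hxv.2.1 i) (hv i) hs hst
  refine ⟨Xinf, M / lam + 1, M + 1, lam, by positivity, by positivity, hlam, fun i t ht =>
    ⟨(hXinf i t ht).trans ?_, (hv i t ht).trans ?_⟩⟩ <;> gcongr <;> linarith

/-- Unconditional flocking with exponential rate at the critical exponent `β = 1`. -/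
theorem stmt18 (N : ℕ) (hN : 2 ≤ N) (κ : ℝ) (hκ : 0 < κ)
    (x v : ℝ → Fin N → ℝ) (hxv : IsCFSol2Crit N κ x v)
    (hx0 : ∑ i, x 0 i = 0) (hv0 : ∑ i, v 0 i = 0)
    (hsep : ∀ i j : Fin N, i ≠ j → x 0 i ≠ x 0 j) :
    ∃ Xinf : Fin N → ℝ, ∃ C C' lam : ℝ, 0 < C ∧ 0 < C' ∧ 0 < lam ∧
      ∀ i : Fin N, ∀ t ≥ (0:ℝ),
        |x t i - Xinf i| ≤ C * Real.exp (-lam * t) ∧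
        |v t i| ≤ C' * Real.exp (-lam * t) :=
  stmt18_general N hN κ hκ x v hxv hv0
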